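/- Let w be a workload fluid model solution with w(0) ≤ d_max. Then w(s) < d_max for every s > 0, and the map s ↦ w(s) + s is continuous and strictly increasing on [0,∞). -/

import Mathlib

open MeasureTheory Set Filter Topology
open scoped ENNReal

noncomputable section

namespace OverloadedFIFO

/-- The complement `G(x) = Γ((x, ∞))` of the cumulative distribution function of `Γ`. -/
def Gk (Γ : MeasureTheory.Measure ℝ) (x : ℝ) : ℝ := (Γ (Set.Ioi x)).toReal

/-- Model data: `K` job classes with arrival rates `lam`, service rates `mu`, and
deadline (patience) distributions `Γ`, in the overloaded regime `ρ > 1`.  Each `Γ k` is a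
Borel probability measure on `[0,∞)` (no mass on negatives), with continuous c.d.f.
(no atoms, in particular `Γ k {0} = 0`) and finite mean. -/
structure Data (K : ℕ) where
  lam : Fin K → ℝ
  mu : Fin K → ℝ
  Γ : Fin K → MeasureTheory.Measure ℝ
  lam_pos : ∀ k, 0 < lam k
  mu_pos : ∀ k, 0 < mu k
  Γ_prob : ∀ k, MeasureTheory.IsProbabilityMeasure (Γ k)
  Γ_null_neg : ∀ k, Γ k (Set.Iio 0) = 0
  Γ_noAtom : ∀ k, ∀ x : ℝ, Γ k {x} = 0
  Γ_finite_mean : ∀ k, MeasureTheory.Integrable id (Γ k)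
  rho_gt_one : 1 < ∑ k, lam k / mu k

instance {K : ℕ} (D : Data K) (k : Fin K) : IsProbabilityMeasure (D.Γ k) := D.Γ_prob k

/-- `ρ_k = λ_k / μ_k`. -/
def Data.rho {K : ℕ} (D : Data K) (k : Fin K) : ℝ := D.lam k / D.mu k

/-- `ρ = Σ_k ρ_k`. -/
def Data.rhoTot {K : ℕ} (D : Data K) : ℝ := ∑ k, D.rho k

/-- A workload fluid model solution: a nonnegative function `w` on `[0,∞)` satisfying
`w(t) = w(0) + Σ_k ρ_k ∫_0^t G_k(w(s)) ds − t` for all `t ≥ 0`. -/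
def IsWorkloadSol {K : ℕ} (D : Data K) (w : ℝ → ℝ) : Prop :=
  (∀ t : ℝ, 0 ≤ t → 0 ≤ w t) ∧
  (∀ k : Fin K, ∀ t : ℝ, 0 ≤ t →
    IntervalIntegrable (fun s => Gk (D.Γ k) (w s)) volume 0 t) ∧
  (∀ t : ℝ, 0 ≤ t →
    w t = w 0 + (∑ k, D.rho k * ∫ s in (0:ℝ)..t, Gk (D.Γ k) (w s)) - t)

/-- `w_l = sup {u ≥ 0 : Σ_k ρ_k G_k(u) > 1}`. -/
def wl {K : ℕ} (D : Data K) : ℝ :=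
  sSup {u : ℝ | 0 ≤ u ∧ 1 < ∑ k, D.rho k * Gk (D.Γ k) u}

/-- `w_u = sup {u ≥ 0 : Σ_k ρ_k G_k(u) ≥ 1}`. -/
def wu {K : ℕ} (D : Data K) : ℝ :=
  sSup {u : ℝ | 0 ≤ u ∧ 1 ≤ ∑ k, D.rho k * Gk (D.Γ k) u}

/-- `d_max = max_k sup {x ≥ 0 : G_k(x) > 0} ∈ (0,∞]`, as an extended nonnegative real. -/
def dmax {K : ℕ} (D : Data K) : ℝ≥0∞ :=
  ⨆ k, sSup (ENNReal.ofReal '' {x : ℝ | 0 ≤ x ∧ 0 < Gk (D.Γ k) x})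

/-- `τ(t) = inf {s ∈ [0,t] : w(s) + s ≥ t}`. -/
def tauF (w : ℝ → ℝ) (t : ℝ) : ℝ := sInf {s : ℝ | 0 ≤ s ∧ s ≤ t ∧ t ≤ w s + s}

/-- The nonnegative quadrant `[0,∞)²`. -/
def Q : Set (ℝ × ℝ) := {p | 0 ≤ p.1 ∧ 0 ≤ p.2}

/-- The shift `B_x = {y ∈ [0,∞)² : y − x ∈ B}` of a set `B ⊆ [0,∞)²`. -/
def shift (B : Set (ℝ × ℝ)) (x : ℝ × ℝ) : Set (ℝ × ℝ) :=
  {y | y ∈ Q ∧ (y.1 - x.1, y.2 - x.2) ∈ B}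

/-- Diagonal shift `B_t = B_{(t,t)}`. -/
def shiftd (B : Set (ℝ × ℝ)) (t : ℝ) : Set (ℝ × ℝ) := shift B (t, t)

/-- The set `C = ([0,∞)×{0}) ∪ ({0}×[0,∞))`. -/
def Cset : Set (ℝ × ℝ) := {p | (0 ≤ p.1 ∧ p.2 = 0) ∨ (p.1 = 0 ∧ 0 ≤ p.2)}

/-- The `κ`-enlargement `B^κ = {x ∈ [0,∞)² : inf_{y ∈ B} ‖x−y‖ < κ}` (Euclidean norm). -/
def enlarge (B : Set (ℝ × ℝ)) (κ : ℝ) : Set (ℝ × ℝ) :=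
  {x | x ∈ Q ∧ ∃ y ∈ B, Real.sqrt ((x.1 - y.1) ^ 2 + (x.2 - y.2) ^ 2) < κ}

/-- `w_ϑ = sup {x ≥ 0 : ϑ_+([x,∞)×[0,∞)) > 0}` for a `K`-tuple `ϑ` of measures on `[0,∞)²`. -/
def wMeas {K : ℕ} (ϑ : Fin K → MeasureTheory.Measure (ℝ × ℝ)) : ℝ :=
  sSup {x : ℝ | 0 ≤ x ∧ 0 < ∑ k, ϑ k (Set.Ici x ×ˢ Set.Ici (0:ℝ))}

/-- Membership in the set `I` of admissible initial measures: each `ϑ k` is a finite Borel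
measure on `[0,∞)²`; (I.1) the superposition charges no corner set `C_x`, `x ∈ [0,∞)²`;
(I.2) `w_ϑ < ∞`; (I.3) `max_k G_k(w_ϑ − ε) > 0` for every `ε > 0`. -/
def MemI {K : ℕ} (D : Data K) (ϑ : Fin K → MeasureTheory.Measure (ℝ × ℝ)) : Prop :=
  (∀ k, IsFiniteMeasure (ϑ k)) ∧
  (∀ k, ϑ k Qᶜ = 0) ∧
  (∀ x ∈ Q, (∑ k, ϑ k (shift Cset x)) = 0) ∧
  BddAbove {x : ℝ | 0 ≤ x ∧ 0 < ∑ k, ϑ k (Set.Ici x ×ˢ Set.Ici (0:ℝ))} ∧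
  (∀ ε : ℝ, 0 < ε → ∃ k, 0 < Gk (D.Γ k) (wMeas ϑ - ε))

/-- `δ⁺_w`: the Dirac measure at `w` if `w > 0`, and the zero measure otherwise. -/
def deltaPlus (w : ℝ) : MeasureTheory.Measure ℝ :=
  if 0 < w then MeasureTheory.Measure.dirac w else 0

instance (w : ℝ) : SFinite (deltaPlus w) := by
  unfold deltaPlus; split_ifs <;> infer_instance

/-- `(δ⁺_w × Γ)(B)`, as a real number. -/
def kern (Γ : MeasureTheory.Measure ℝ) (w : ℝ) (B : Set (ℝ × ℝ)) : ℝ :=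
  (((deltaPlus w).prod Γ) B).toReal

/-- A (measure-valued) fluid model solution with initial measure `ϑ`: a family
`ζ(t) = (ζ_1(t),…,ζ_K(t))` of finite Borel measures on `[0,∞)²` with `ζ(0) = ϑ` satisfying
`ζ_k(t)(B) = ϑ_k(B_t) + λ_k ∫_0^t (δ⁺_{w(s)} × Γ_k)(B_{t−s}) ds` for every Borel
`B ⊆ [0,∞)²` and `t ≥ 0`, where `w` is the (unique) workload fluid model solution with
`w(0) = w_ϑ`. -/
def IsFluidSol {K : ℕ} (D : Data K) (ϑ : Fin K → MeasureTheory.Measure (ℝ × ℝ))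
    (ζ : ℝ → Fin K → MeasureTheory.Measure (ℝ × ℝ)) : Prop :=
  ∃ w : ℝ → ℝ, IsWorkloadSol D w ∧ w 0 = wMeas ϑ ∧
    (∀ t : ℝ, 0 ≤ t → ∀ k, IsFiniteMeasure (ζ t k) ∧ ζ t k Qᶜ = 0) ∧
    (∀ k, ζ 0 k = ϑ k) ∧
    (∀ k, ∀ B : Set (ℝ × ℝ), B ⊆ Q → MeasurableSet B → ∀ t : ℝ, 0 ≤ t →
      IntervalIntegrable (fun s => kern (D.Γ k) (w s) (shiftd B (t - s))) volume 0 t ∧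
      ζ t k B = ϑ k (shiftd B t) +
        ENNReal.ofReal (D.lam k * ∫ s in (0:ℝ)..t, kern (D.Γ k) (w s) (shiftd B (t - s))))

/-- The candidate invariant state `θ^w`:
`θ^w_k(B) = λ_k ∫_0^w Γ_k({p ≥ u : (w−u, p−u) ∈ B}) du`. -/
def thetaW {K : ℕ} (D : Data K) (w : ℝ) (k : Fin K) : MeasureTheory.Measure (ℝ × ℝ) :=
  ENNReal.ofReal (D.lam k) •
    MeasureTheory.Measure.map (fun up : ℝ × ℝ => (w - up.1, up.2 - up.1))
      ((((MeasureTheory.volume.restrict (Set.Ioo (0:ℝ) w))).prod (D.Γ k)).restrict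
        {up : ℝ × ℝ | up.1 ≤ up.2})

/-! Along a solution, `w + id` is `w 0` plus a primitive of `s ↦ load (w s)`, where
`load x = Σ_k ρ_k G_k(x)` is nonnegative, antitone, and continuous because the `Γ_k` have no
atoms. This gives continuity of `w + id`, and strict monotonicity once `w < d_max` after time `0`,
since `load` is positive below `d_max`. If `d_max < ∞`, then `load d_max = 0`, so `load < 1` on
`[c, ∞)` for some `c < d_max`; thus `w` strictly decreases while `w ≥ c`, and cannot climb from
`w 0 ≤ d_max` up to `d_max`. -/

open ProbabilityTheory in
theorem continuous_Gk (Γ : Measure ℝ) [IsProbabilityMeasure Γ] (hΓ : ∀ x, Γ {x} = 0) :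
    Continuous (Gk Γ) := by
  have hleft (a : ℝ) : Function.leftLim (cdf Γ) a = cdf Γ a := by
    have h := (cdf Γ).measure_singleton a
    rw [measure_cdf, hΓ, eq_comm, ENNReal.ofReal_eq_zero, sub_nonpos] at h
    exact le_antisymm ((cdf Γ).mono.leftLim_le le_rfl) h
  have hcdf : Continuous (cdf Γ) := continuous_iff_continuousAt.2 fun a =>
    continuousAt_iff_continuous_left_right.2
      ⟨continuousWithinAt_Iio_iff_Iic.1 ((cdf Γ).mono.continuousWithinAt_Iio_iff_leftLim_eq.2
        (hleft a)), (cdf Γ).right_continuous a⟩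
  have hG : Gk Γ = fun x => 1 - cdf Γ x := by
    ext x
    rw [cdf_eq_real, ← probReal_compl_eq_one_sub measurableSet_Iic, compl_Iic]
    rfl
  rw [hG]
  exact continuous_const.sub hcdf

theorem Gk_nonneg (Γ : Measure ℝ) (x : ℝ) : 0 ≤ Gk Γ x :=
  ENNReal.toReal_nonneg

theorem Gk_antitone (Γ : Measure ℝ) [IsFiniteMeasure Γ] : Antitone (Gk Γ) :=
  fun _ _ hxy => ENNReal.toReal_mono (measure_ne_top _ _) (measure_mono (Ioi_subset_Ioi hxy))

theorem continuousOn_primitive_Ici {E : Type*} [NormedAddCommGroup E] [NormedSpace ℝ E]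
    {μ : Measure ℝ} [NullSingletonClass μ] {g : ℝ → E} {a : ℝ}
    (hg : ∀ t, a ≤ t → IntervalIntegrable g μ a t) :
    ContinuousOn (fun t => ∫ s in a..t, g s ∂μ) (Ici a) := by
  refine continuousOn_of_locally_continuousOn fun t ht =>
    ⟨Iio (t + 1), isOpen_Iio, lt_add_one t, ?_⟩
  have hta : a ≤ t + 1 := by linarith [mem_Ici.1 ht]
  refine (intervalIntegral.continuousOn_primitive_interval' (hg _ hta) left_mem_uIcc).mono ?_
  rw [uIcc_of_le hta]
  exact fun s hs => ⟨hs.1, hs.2.le⟩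

/-- Apply `hdec` at the last `u ∈ [a, t]` with `w u ≤ c`, or at `u = a` if there is none. -/
theorem lt_of_decreasing_above {w : ℝ → ℝ} {a c d t : ℝ} (hcd : c < d) (hat : a < t)
    (hw : ContinuousOn w (Icc a t)) (ha : w a ≤ d)
    (hdec : ∀ u ∈ Ico a t, (∀ s ∈ Ioc u t, c ≤ w s) → w t < w u) : w t < d := by
  by_contra! hwt
  set A := Icc a t ∩ w ⁻¹' Iic c
  rcases A.eq_empty_or_nonempty with hA | hA
  · have := hdec a ⟨le_rfl, hat⟩ fun s hs => by
      by_contra! hs'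
      exact hA.subset ⟨⟨hs.1.le, hs.2⟩, hs'.le⟩
    linarith
  · have hAc : IsCompact A := isCompact_Icc.of_isClosed_subset
      (hw.preimage_isClosed_of_isClosed isClosed_Icc isClosed_Iic) inter_subset_left
    obtain ⟨⟨hau, hut⟩, hwu⟩ := hAc.sSup_mem hA
    have hwu : w (sSup A) ≤ c := hwu
    have hu : sSup A < t := hut.lt_of_ne fun h => by
      rw [h] at hwu
      linarith
    have := hdec (sSup A) ⟨hau, hu⟩ fun s hs => by
      by_contra! hs'
      exact hs.1.not_ge (le_csSup hAc.bddAbove ⟨⟨hau.trans hs.1.le, hs.2⟩, hs'.le⟩)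
    linarith

namespace Data

variable {K : ℕ} (D : Data K)

def load (x : ℝ) : ℝ := ∑ k, D.rho k * Gk (D.Γ k) x

theorem rho_pos (k : Fin K) : 0 < D.rho k :=
  div_pos (D.lam_pos k) (D.mu_pos k)

theorem load_nonneg (x : ℝ) : 0 ≤ D.load x :=
  Finset.sum_nonneg fun k _ => mul_nonneg (D.rho_pos k).le (Gk_nonneg _ x)

theorem load_antitone : Antitone D.load := fun _ _ hxy =>
  Finset.sum_le_sum fun k _ => mul_le_mul_of_nonneg_left (Gk_antitone _ hxy) (D.rho_pos k).le

theorem continuous_load : Continuous D.load :=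
  continuous_finsetSum _ fun k _ => continuous_const.mul (continuous_Gk _ (D.Γ_noAtom k))

theorem ofReal_le_dmax {k : Fin K} {x : ℝ} (hx : 0 ≤ x) (hG : 0 < Gk (D.Γ k) x) :
    ENNReal.ofReal x ≤ dmax D := by
  unfold dmax
  exact le_iSup_of_le k (le_sSup (mem_image_of_mem _ ⟨hx, hG⟩))

theorem load_eq_zero_of_dmax_le {x : ℝ} (hx : 0 ≤ x) (h : dmax D ≤ ENNReal.ofReal x) :
    D.load x = 0 := by
  refine Finset.sum_eq_zero fun k _ => ?_
  suffices Gk (D.Γ k) x = 0 by rw [this, mul_zero]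
  by_contra hne
  have hpos : 0 < Gk (D.Γ k) x := (Gk_nonneg _ x).lt_of_ne' hne
  obtain ⟨y, hxy, hy⟩ := ((continuous_Gk _ (D.Γ_noAtom k)).continuousAt.eventually
    (lt_mem_nhds hpos)).exists_gt
  have := (D.ofReal_le_dmax (hx.trans hxy.le) hy).trans h
  exact hxy.not_ge ((ENNReal.ofReal_le_ofReal_iff hx).1 this)

theorem load_pos_of_lt_dmax {y : ℝ} (h : ENNReal.ofReal y < dmax D) : 0 < D.load y := by
  obtain ⟨k, hk⟩ := lt_iSup_iff.1 h
  obtain ⟨_, ⟨x, ⟨-, hx⟩, rfl⟩, hyx⟩ := lt_sSup_iff.1 hk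
  have hyx : y < x := (ENNReal.ofReal_lt_ofReal_iff').1 hyx |>.1
  calc 0 < D.rho k * Gk (D.Γ k) x := mul_pos (D.rho_pos k) hx
    _ ≤ D.rho k * Gk (D.Γ k) y :=
        mul_le_mul_of_nonneg_left (Gk_antitone _ hyx.le) (D.rho_pos k).le
    _ ≤ D.load y := Finset.single_le_sum (f := fun j => D.rho j * Gk (D.Γ j) y)
        (fun j _ => mul_nonneg (D.rho_pos j).le (Gk_nonneg _ y)) (Finset.mem_univ k)

theorem exists_lt_toReal_dmax_load_lt_one (h : dmax D ≠ ⊤) :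
    ∃ c < (dmax D).toReal, D.load c < 1 := by
  have hzero : D.load (dmax D).toReal = 0 :=
    D.load_eq_zero_of_dmax_le ENNReal.toReal_nonneg (ENNReal.ofReal_toReal h).ge
  exact (D.continuous_load.continuousAt.eventually (gt_mem_nhds (hzero.trans_lt one_pos))).exists_lt

end Data

namespace IsWorkloadSol

variable {K : ℕ} {D : Data K} {w : ℝ → ℝ}

theorem intervalIntegrable_load (hw : IsWorkloadSol D w) {u t : ℝ} (hu : 0 ≤ u)
    (hut : u ≤ t) :
    IntervalIntegrable (fun s => D.load (w s)) volume u t := by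
  have h0t : IntervalIntegrable (fun s => D.load (w s)) volume 0 t := by
    simpa only [Data.load, Finset.sum_fn] using
      IntervalIntegrable.sum Finset.univ fun k _ => (hw.2.1 k t (hu.trans hut)).const_mul (D.rho k)
  refine h0t.mono_set ?_
  rw [uIcc_of_le hut, uIcc_of_le (hu.trans hut)]
  exact Icc_subset_Icc hu le_rfl

theorem add_id_eq (hw : IsWorkloadSol D w) {t : ℝ} (ht : 0 ≤ t) :
    w t + t = w 0 + ∫ s in (0:ℝ)..t, D.load (w s) := by
  simp only [Data.load]
  rw [hw.2.2 t ht, intervalIntegral.integral_finsetSum fun k _ => (hw.2.1 k t ht).const_mul _]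
  simp only [intervalIntegral.integral_const_mul]
  ring

theorem add_id_sub_add_id (hw : IsWorkloadSol D w) {u t : ℝ} (hu : 0 ≤ u) (hut : u ≤ t) :
    w t + t - (w u + u) = ∫ s in u..t, D.load (w s) := by
  rw [hw.add_id_eq (hu.trans hut), hw.add_id_eq hu, ← intervalIntegral.integral_interval_sub_left
    (hw.intervalIntegrable_load le_rfl (hu.trans hut)) (hw.intervalIntegrable_load le_rfl hu)]
  ring

theorem continuousOn_add_id (hw : IsWorkloadSol D w) :
    ContinuousOn (fun s => w s + s) (Ici 0) :=
  (continuousOn_const.add (continuousOn_primitive_Ici fun _ ht =>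
    hw.intervalIntegrable_load le_rfl ht)).congr fun _ ht => hw.add_id_eq ht

theorem continuousOn (hw : IsWorkloadSol D w) : ContinuousOn w (Ici 0) :=
  (hw.continuousOn_add_id.sub continuousOn_id).congr fun s _ => by simp

theorem continuousOn_load_comp (hw : IsWorkloadSol D w) :
    ContinuousOn (fun s => D.load (w s)) (Ici 0) :=
  D.continuous_load.comp_continuousOn hw.continuousOn

theorem lt_of_load_lt_one (hw : IsWorkloadSol D w) {u t : ℝ} (hu : 0 ≤ u) (hut : u < t)
    (hload : ∀ s ∈ Ioc u t, D.load (w s) < 1) : w t < w u := by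
  have := intervalIntegral.integral_lt_integral_of_continuousOn_of_le_of_exists_lt hut
    (hw.continuousOn_load_comp.mono fun s hs => hu.trans hs.1)
    continuousOn_const (fun s hs => (hload s hs).le)
    ⟨t, right_mem_Icc.2 hut.le, hload t ⟨hut, le_rfl⟩⟩
  rw [← hw.add_id_sub_add_id hu hut.le, intervalIntegral.integral_const, smul_eq_mul,
    mul_one] at this
  linarith

theorem ofReal_lt_dmax (hw : IsWorkloadSol D w) (h0 : ENNReal.ofReal (w 0) ≤ dmax D) {t : ℝ}
    (ht : 0 < t) : ENNReal.ofReal (w t) < dmax D := by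
  by_cases htop : dmax D = ⊤
  · rw [htop]
    exact ENNReal.ofReal_lt_top
  obtain ⟨c, hcd, hc⟩ := D.exists_lt_toReal_dmax_load_lt_one htop
  rw [← ENNReal.ofReal_toReal htop] at h0 ⊢
  rw [ENNReal.ofReal_lt_ofReal_iff_of_nonneg (hw.1 t ht.le)]
  refine lt_of_decreasing_above hcd ht (hw.continuousOn.mono Icc_subset_Ici_self)
    ((ENNReal.ofReal_le_ofReal_iff ENNReal.toReal_nonneg).1 h0) fun u hu hcw => ?_
  exact hw.lt_of_load_lt_one hu.1 hu.2 fun s hs => (D.load_antitone (hcw s hs)).trans_lt hc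

theorem strictMonoOn_add_id (hw : IsWorkloadSol D w) (h0 : ENNReal.ofReal (w 0) ≤ dmax D) :
    StrictMonoOn (fun s => w s + s) (Ici 0) := fun u hu t _ hut => by
  have hpos : 0 < ∫ s in u..t, D.load (w s) :=
    intervalIntegral.integral_pos hut
      (hw.continuousOn_load_comp.mono fun s hs => hu.trans hs.1)
      (fun s _ => D.load_nonneg _)
      ⟨t, right_mem_Icc.2 hut.le,
        D.load_pos_of_lt_dmax (hw.ofReal_lt_dmax h0 (hu.trans_lt hut))⟩
  linarith [hw.add_id_sub_add_id hu hut.le]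

end IsWorkloadSol

/-- If `w` is a workload fluid model solution with `w(0) ≤ d_max`, then
`w(s) < d_max` for every `s > 0`, and `s ↦ w(s) + s` is continuous and strictly increasing
on `[0,∞)`. -/
theorem workload_below_dmax {K : ℕ} (D : Data K) (w : ℝ → ℝ)
    (hw : IsWorkloadSol D w) (h0 : ENNReal.ofReal (w 0) ≤ dmax D) :
    (∀ s : ℝ, 0 < s → ENNReal.ofReal (w s) < dmax D) ∧
    ContinuousOn (fun s => w s + s) (Set.Ici (0:ℝ)) ∧
    StrictMonoOn (fun s => w s + s) (Set.Ici (0:ℝ)) :=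
  ⟨fun _ hs => hw.ofReal_lt_dmax h0 hs, hw.continuousOn_add_id, hw.strictMonoOn_add_id h0⟩

end OverloadedFIFO
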